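/- arXiv:2101.11091 — 2 statements merged into one kernel-verified Lean document; each statement's English description precedes it below -/
import Mathlib

section
/- (Key descent lemma in the proof of Theorem 1) Let Φ ∈ ℝ^{m×n}, y ∈ ℝᵐ, K ≤ n, ρ > 0, q > 0, and define F(x) = ½xᵀΦᵀΦx − (Φᵀy)ᵀx + ρ(‖x‖₁ − ‖x‖_{K,1}). Let x ∈ ℝⁿ with ‖x‖₂ ≤ q, and let i be an index with xᵢ ≠ 0 such that removing the i-th coordinate does not change the top-(K,1) norm, i.e., ‖x − xᵢeᵢ‖_{K,1} = ‖x‖_{K,1}. If ρ > q(‖ΦᵀΦeᵢ‖₂ + |(ΦᵀΦ)_{ii}|/2) + |(Φᵀy)ᵢ|, then F(x − xᵢeᵢ) < F(x). -/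
open Matrix

/-- The top-(K,1) norm: the maximum over all index sets `S` of cardinality `K`
of the sum of the absolute values of the entries of `x` on `S`. -/
noncomputable def topNorm {n : ℕ} (K : ℕ) (x : Fin n → ℝ) : ℝ :=
  sSup { t : ℝ | ∃ S : Finset (Fin n), S.card = K ∧ t = ∑ i ∈ S, |x i| }

/-- Euclidean (ℓ₂) norm of a vector. -/
noncomputable def l2norm {k : ℕ} (v : Fin k → ℝ) : ℝ :=
  Real.sqrt (∑ i, (v i) ^ 2)

lemma l2_cauchy {k : ℕ} (u v : Fin k → ℝ) : |∑ j, u j * v j| ≤ l2norm u * l2norm v := by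
  calc |∑ j, u j * v j| ≤ ∑ j, |u j * v j| := Finset.abs_sum_le_sum_abs _ _
    _ = ∑ j, |u j| * |v j| := by simp [abs_mul]
    _ ≤ Real.sqrt (∑ j, |u j| ^ 2) * Real.sqrt (∑ j, |v j| ^ 2) :=
        Real.sum_mul_le_sqrt_mul_sqrt _ _ _
    _ = l2norm u * l2norm v := by simp [l2norm, sq_abs]

lemma l2_coord_le {k : ℕ} (v : Fin k → ℝ) (i : Fin k) : |v i| ≤ l2norm v := by
  rw [l2norm, ← Real.sqrt_sq_eq_abs]
  exact Real.sqrt_le_sqrt (Finset.single_le_sum (fun j _ => sq_nonneg (v j)) (Finset.mem_univ i))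

theorem stmt3 {m n : ℕ} (Φ : Matrix (Fin m) (Fin n) ℝ) (y : Fin m → ℝ)
    (K : ℕ) (hK : K ≤ n) (ρ : ℝ) (hρpos : 0 < ρ) (q : ℝ) (hq : 0 < q)
    (F : (Fin n → ℝ) → ℝ)
    (hF : ∀ x, F x =
      (1 / 2) * (x ⬝ᵥ (Φᵀ * Φ).mulVec x) - (Φᵀ.mulVec y) ⬝ᵥ x
        + ρ * ((∑ j, |x j|) - topNorm K x))
    (x : Fin n → ℝ) (hxq : l2norm x ≤ q) (i : Fin n) (hxi : x i ≠ 0)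
    (htop : topNorm K (x - x i • (Pi.single i 1 : Fin n → ℝ)) = topNorm K x)
    (hρ : ρ > q * (l2norm ((Φᵀ * Φ).mulVec ((Pi.single i 1 : Fin n → ℝ))) + |(Φᵀ * Φ) i i| / 2)
        + |(Φᵀ.mulVec y) i|) :
    F (x - x i • (Pi.single i 1 : Fin n → ℝ)) < F x := by
  set A := Φᵀ * Φ with hAdef
  set b := Φᵀ.mulVec y with hbdef
  set e : Fin n → ℝ := Pi.single i 1 with hedef
  set c := x i with hcdef
  set z := x - c • e with hzdef
  -- symmetry of A
  have hA : ∀ j k, A j k = A k j := by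
    intro j k
    simp [hAdef, Matrix.mul_apply, Matrix.transpose_apply, mul_comm]
  -- column of A
  have hAe : ∀ j, A.mulVec e j = A j i := by
    intro j
    simp [Matrix.mulVec, hedef]
  -- basic dot products
  have hedotAx : e ⬝ᵥ A.mulVec x = A.mulVec x i := single_one_dotProduct _ _
  have hxdotAe : x ⬝ᵥ A.mulVec e = A.mulVec x i := by
    have h1 : x ⬝ᵥ A.mulVec e = ∑ j, x j * A j i :=
      Finset.sum_congr rfl fun j _ => by rw [hAe j]
    have h2 : A.mulVec x i = ∑ j, A i j * x j := rfl
    rw [h1, h2]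
    exact Finset.sum_congr rfl fun j _ => by rw [hA i j, mul_comm]
  have hedotAe : e ⬝ᵥ A.mulVec e = A i i := by
    rw [single_one_dotProduct, hAe]
  -- quadratic expansion
  have hquad : z ⬝ᵥ A.mulVec z
      = x ⬝ᵥ A.mulVec x - 2 * c * A.mulVec x i + c ^ 2 * A i i := by
    rw [hzdef, Matrix.mulVec_sub, Matrix.mulVec_smul, sub_dotProduct, smul_dotProduct,
      dotProduct_sub, dotProduct_sub, dotProduct_smul, dotProduct_smul,
      hedotAx, hxdotAe, hedotAe]
    simp only [smul_eq_mul]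
    ring
  have hbz : b ⬝ᵥ z = b ⬝ᵥ x - c * b i := by
    rw [hzdef, dotProduct_sub, dotProduct_smul, dotProduct_single_one, smul_eq_mul]
  -- ℓ1 part
  have hzj : ∀ j, j ≠ i → z j = x j := by
    intro j hj
    simp [hzdef, hedef, Pi.single_eq_of_ne hj]
  have hzi : z i = 0 := by simp [hzdef, hedef, hcdef]
  have hl1 : ∑ j, |z j| = (∑ j, |x j|) - |c| := by
    have h1 : ∑ j, |z j| = |z i| + ∑ j ∈ Finset.univ.erase i, |z j| :=
      (Finset.add_sum_erase _ _ (Finset.mem_univ i)).symm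
    have h2 : ∑ j, |x j| = |x i| + ∑ j ∈ Finset.univ.erase i, |x j| :=
      (Finset.add_sum_erase _ _ (Finset.mem_univ i)).symm
    have h3 : ∑ j ∈ Finset.univ.erase i, |z j| = ∑ j ∈ Finset.univ.erase i, |x j| :=
      Finset.sum_congr rfl fun j hj => by rw [hzj j (Finset.ne_of_mem_erase hj)]
    rw [h1, h2, h3, hzi]
    simp [hcdef]
  -- the difference
  have hdiff : F z - F x
      = -(c * A.mulVec x i) + c ^ 2 * A i i / 2 + c * b i - ρ * |c| := by
    rw [hF z, hF x, htop, hquad, hbz, hl1]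
    ring
  -- bounds
  have hcq : |c| ≤ q := (l2_coord_le x i).trans hxq
  have hcpos : 0 < |c| := abs_pos.mpr hxi
  have hRbound : |A.mulVec x i| ≤ l2norm (A.mulVec e) * q := by
    have hform : A.mulVec x i = ∑ j, A.mulVec e j * x j := by
      have h2 : A.mulVec x i = ∑ j, A i j * x j := rfl
      rw [h2]
      exact Finset.sum_congr rfl fun j _ => by rw [hAe j, hA j i]
    rw [hform]
    calc |∑ j, A.mulVec e j * x j| ≤ l2norm (A.mulVec e) * l2norm x := l2_cauchy _ _
      _ ≤ l2norm (A.mulVec e) * q := by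
          apply mul_le_mul_of_nonneg_left hxq
          exact Real.sqrt_nonneg _
  have hAiibound : c ^ 2 * A i i / 2 ≤ |c| * (q * |A i i| / 2) := by
    have : c ^ 2 * A i i ≤ |c| * (q * |A i i|) := by
      calc c ^ 2 * A i i ≤ |c ^ 2 * A i i| := le_abs_self _
        _ = |c| * (|c| * |A i i|) := by rw [sq, abs_mul, abs_mul, mul_assoc]
        _ ≤ |c| * (q * |A i i|) := by
            apply mul_le_mul_of_nonneg_left _ (abs_nonneg c)
            exact mul_le_mul_of_nonneg_right hcq (abs_nonneg _)
    linarith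
  have hmain : -(c * A.mulVec x i) + c ^ 2 * A i i / 2 + c * b i < ρ * |c| := by
    have h1 : -(c * A.mulVec x i) ≤ |c| * (l2norm (A.mulVec e) * q) := by
      calc -(c * A.mulVec x i) ≤ |c * A.mulVec x i| := neg_le_abs _
        _ = |c| * |A.mulVec x i| := abs_mul _ _
        _ ≤ |c| * (l2norm (A.mulVec e) * q) :=
            mul_le_mul_of_nonneg_left hRbound (abs_nonneg c)
    have h2 : c * b i ≤ |c| * |b i| := by
      calc c * b i ≤ |c * b i| := le_abs_self _
        _ = |c| * |b i| := abs_mul _ _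
    have h3 : |c| * (l2norm (A.mulVec e) * q) + |c| * (q * |A i i| / 2) + |c| * |b i|
        = |c| * (q * (l2norm (A.mulVec e) + |A i i| / 2) + |b i|) := by ring
    have h4 : |c| * (q * (l2norm (A.mulVec e) + |A i i| / 2) + |b i|) < |c| * ρ := by
      exact mul_lt_mul_of_pos_left hρ hcpos
    nlinarith [h1, h2, hAiibound, h3, h4]
  have : F z - F x < 0 := by rw [hdiff]; linarith [hmain]
  linarith [this]
end

section
/- (Equivalence of the ℓ₀-constrained and DC-constrained problems) Let Φ ∈ ℝ^{m×n}, y ∈ ℝᵐ, and K ≤ n. Then the feasible sets {x ∈ ℝⁿ : ‖x‖₀ ≤ K} and {x ∈ ℝⁿ : ‖x‖₁ − ‖x‖_{K,1} = 0} coincide; consequently, x* minimizes ½‖y − Φx‖₂² subject to ‖x‖₀ ≤ K if and only if x* minimizes ½‖y − Φx‖₂² subject to ‖x‖₁ − ‖x‖_{K,1} = 0. -/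
open Matrix

/-- Number of nonzero entries of a vector (the "ℓ₀-norm"). -/
noncomputable def l0norm {n : ℕ} (x : Fin n → ℝ) : ℕ :=
  (Finset.univ.filter fun i => x i ≠ 0).card

lemma key_iff {n : ℕ} (K : ℕ) (hK : K ≤ n) (x : Fin n → ℝ) :
    l0norm x ≤ K ↔ (∑ i, |x i|) - topNorm K x = 0 := by
  classical
  set T : Finset ℝ := (Finset.univ.powersetCard K).image (fun S => ∑ i ∈ S, |x i|) with hT
  have hset : { t : ℝ | ∃ S : Finset (Fin n), S.card = K ∧ t = ∑ i ∈ S, |x i| } = ↑T := by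
    ext t
    simp only [hT, Finset.coe_image, Set.mem_image, Finset.mem_coe,
      Finset.mem_powersetCard_univ, Set.mem_setOf_eq]
    constructor
    · rintro ⟨S, hc, rfl⟩; exact ⟨S, hc, rfl⟩
    · rintro ⟨S, hc, rfl⟩; exact ⟨S, hc, rfl⟩
  have hTne : T.Nonempty := by
    obtain ⟨S, _, hS⟩ := Finset.exists_subset_card_eq (s := (Finset.univ : Finset (Fin n))) (n := K)
      (by simpa using hK)
    exact ⟨_, Finset.mem_image.2 ⟨S, Finset.mem_powersetCard_univ.2 hS, rfl⟩⟩
  have hsup : topNorm K x = T.max' hTne := by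
    rw [topNorm, hset]; exact hTne.csSup_eq_max'
  have hle : ∀ S : Finset (Fin n), (∑ i ∈ S, |x i|) ≤ ∑ i, |x i| :=
    fun S => Finset.sum_le_sum_of_subset_of_nonneg (Finset.subset_univ S)
      (fun i _ _ => abs_nonneg _)
  have htople : topNorm K x ≤ ∑ i, |x i| := by
    rw [hsup]
    obtain ⟨S, _, hSe⟩ := Finset.mem_image.1 (T.max'_mem hTne)
    rw [← hSe]; exact hle S
  constructor
  · intro h0
    obtain ⟨S, hsub, _, hcard⟩ := Finset.exists_subsuperset_card_eq
      (Finset.subset_univ (Finset.univ.filter fun i => x i ≠ 0)) h0 (by simpa using hK)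
    have hsum : (∑ i ∈ S, |x i|) = ∑ i, |x i| := by
      refine Finset.sum_subset (Finset.subset_univ S) (fun i _ hiS => ?_)
      have : x i = 0 := by
        by_contra hxi
        exact hiS (hsub (Finset.mem_filter.2 ⟨Finset.mem_univ i, hxi⟩))
      simp [this]
    have hge : (∑ i, |x i|) ≤ topNorm K x := by
      rw [hsup, ← hsum]
      exact T.le_max' _ (Finset.mem_image.2 ⟨S, Finset.mem_powersetCard_univ.2 hcard, rfl⟩)
    linarith
  · intro hdiff
    have heq : topNorm K x = ∑ i, |x i| := by linarith
    obtain ⟨S, hScard, hSe⟩ := Finset.mem_image.1 (T.max'_mem hTne)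
    rw [Finset.mem_powersetCard_univ] at hScard
    have hsum : (∑ i ∈ S, |x i|) = ∑ i, |x i| := by rw [hSe, ← hsup, heq]
    have hzero : ∀ i ∈ Finset.univ \ S, |x i| = 0 := by
      have h0 : (∑ i ∈ Finset.univ \ S, |x i|) = 0 := by
        have := Finset.sum_sdiff (Finset.subset_univ S) (f := fun i => |x i|)
        linarith
      exact fun i hi => le_antisymm
        (h0 ▸ Finset.single_le_sum (fun j _ => abs_nonneg (x j)) hi) (abs_nonneg _)
    have hsubset : (Finset.univ.filter fun i => x i ≠ 0) ⊆ S := by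
      intro i hi
      by_contra hiS
      have := hzero i (Finset.mem_sdiff.2 ⟨Finset.mem_univ i, hiS⟩)
      exact (Finset.mem_filter.1 hi).2 (abs_eq_zero.1 this)
    calc l0norm x ≤ S.card := Finset.card_le_card hsubset
      _ = K := hScard

theorem stmt15 {m n : ℕ} (Φ : Matrix (Fin m) (Fin n) ℝ) (y : Fin m → ℝ)
    (K : ℕ) (hK : K ≤ n) :
    { x : Fin n → ℝ | l0norm x ≤ K }
        = { x : Fin n → ℝ | (∑ i, |x i|) - topNorm K x = 0 } ∧
    ∀ xStar : Fin n → ℝ,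
      (l0norm xStar ≤ K ∧ ∀ x : Fin n → ℝ, l0norm x ≤ K →
          (1 / 2) * (l2norm (y - Φ.mulVec xStar)) ^ 2 ≤
            (1 / 2) * (l2norm (y - Φ.mulVec x)) ^ 2)
      ↔
      ((∑ i, |xStar i|) - topNorm K xStar = 0 ∧
        ∀ x : Fin n → ℝ, (∑ i, |x i|) - topNorm K x = 0 →
          (1 / 2) * (l2norm (y - Φ.mulVec xStar)) ^ 2 ≤
            (1 / 2) * (l2norm (y - Φ.mulVec x)) ^ 2) := by
  constructor
  · ext x
    exact key_iff K hK x
  · intro xStar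
    constructor
    · rintro ⟨h1, h2⟩
      exact ⟨(key_iff K hK xStar).1 h1, fun x hx => h2 x ((key_iff K hK x).2 hx)⟩
    · rintro ⟨h1, h2⟩
      exact ⟨(key_iff K hK xStar).2 h1, fun x hx => h2 x ((key_iff K hK x).1 hx)⟩
end
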